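/- arXiv:2307.16524 — 4 statements merged into one kernel-verified Lean document; each statement's English description precedes it below -/
import Mathlib

section
/- With notation as in the general swapping rule, if the post-swapping operator is nonzero in trace, then the normalized post-swapping state ρ^{AD} has Bloch coefficient matrix R^{AD} = (R^{AB} 𝔯^{BC} R^{CD}) / [R^{AB} 𝔯^{BC} R^{CD}]_{00}, where [X]_{00} denotes the (0,0) entry of the 4×4 matrix X. -/
open Matrix Kronecker ComplexOrder

/-- Pauli matrices, with `σ 0 = I`. -/
noncomputable def σ : Fin 4 → Matrix (Fin 2) (Fin 2) ℂ :=
  ![1, !![0, 1; 1, 0], !![0, -Complex.I; Complex.I, 0], !![1, 0; 0, -1]]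

/-- Partial trace over the middle two qubits B and C, with tensor ordering A⊗B⊗C⊗D. -/
noncomputable def trBC
    (X : Matrix (Fin 2 × Fin 2 × Fin 2 × Fin 2) (Fin 2 × Fin 2 × Fin 2 × Fin 2) ℂ) :
    Matrix (Fin 2 × Fin 2) (Fin 2 × Fin 2) ℂ :=
  Matrix.of fun p q => ∑ b : Fin 2, ∑ c : Fin 2, X (p.1, b, c, p.2) (q.1, b, c, q.2)

/-- The four-qubit operator ρ^{AB} ⊗ ρ^{CD}. -/
noncomputable def stateABCD (ρAB ρCD : Matrix (Fin 2 × Fin 2) (Fin 2 × Fin 2) ℂ) :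
    Matrix (Fin 2 × Fin 2 × Fin 2 × Fin 2) (Fin 2 × Fin 2 × Fin 2 × Fin 2) ℂ :=
  Matrix.of fun x y =>
    ρAB (x.1, x.2.1) (y.1, y.2.1) * ρCD (x.2.2.1, x.2.2.2) (y.2.2.1, y.2.2.2)

/-- The four-qubit operator 𝟙^A ⊗ E^{BC} ⊗ 𝟙^D. -/
noncomputable def opBC (E : Matrix (Fin 2 × Fin 2) (Fin 2 × Fin 2) ℂ) :
    Matrix (Fin 2 × Fin 2 × Fin 2 × Fin 2) (Fin 2 × Fin 2 × Fin 2 × Fin 2) ℂ :=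
  Matrix.of fun x y =>
    (if x.1 = y.1 then 1 else 0) * E (x.2.1, x.2.2.1) (y.2.1, y.2.2.1) *
      (if x.2.2.2 = y.2.2.2 then 1 else 0)


set_option maxHeartbeats 1000000 in
private lemma lhs4 (ρAB ρCD E : Matrix (Fin 2 × Fin 2) (Fin 2 × Fin 2) ℂ)
    (A D : Matrix (Fin 2) (Fin 2) ℂ) :
    (trBC (stateABCD ρAB ρCD * opBC E) * (A ⊗ₖ D)).trace
    = ∑ a : Fin 2, ∑ a' : Fin 2, ∑ b : Fin 2, ∑ b' : Fin 2, ∑ c : Fin 2, ∑ c' : Fin 2,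
      ∑ d : Fin 2, ∑ d' : Fin 2,
        ρAB (a,b) (a',b') * E (b',c') (b,c) * ρCD (c,d) (c',d') * A a' a * D d' d := by
  simp only [Matrix.trace, Matrix.diag, Matrix.mul_apply, trBC, stateABCD, opBC,
    Matrix.of_apply, Matrix.kroneckerMap_apply, Fintype.sum_prod_type,
    Fin.sum_univ_two]
  norm_num
  ring

set_option maxHeartbeats 1000000 in
private lemma Eexp (E : Matrix (Fin 2 × Fin 2) (Fin 2 × Fin 2) ℂ) (u1 u2 v1 v2 : Fin 2) :
    E (u1,u2) (v1,v2) = ∑ k : Fin 4, ∑ l : Fin 4,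
      (1/4 : ℂ) * (E * (σ k ⊗ₖ σ l)).trace * σ k u1 v1 * σ l u2 v2 := by
  have hσ0 : σ 0 = !![1,0;0,1] := by rw [show σ 0 = 1 from rfl, Matrix.one_fin_two]
  have hσ1 : σ 1 = !![0,1;1,0] := rfl
  have hσ2 : σ 2 = !![0,-Complex.I;Complex.I,0] := rfl
  have hσ3 : σ 3 = !![1,0;0,-1] := rfl
  fin_cases u1 <;> fin_cases u2 <;> fin_cases v1 <;> fin_cases v2 <;>
    simp only [Fin.sum_univ_four, hσ0, hσ1, hσ2, hσ3, Matrix.trace, Matrix.diag,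
      Matrix.mul_apply, Matrix.kroneckerMap_apply, Fintype.sum_prod_type, Fin.sum_univ_two,
      Matrix.cons_val', Matrix.cons_val_zero, Matrix.cons_val_one,
      Matrix.head_cons, Matrix.empty_val', Matrix.cons_val_fin_one, Matrix.head_fin_const] <;>
    norm_num <;> ring_nf <;> simp [Complex.ext_iff] <;> (try constructor) <;> ring

private lemma tr2 (ρ : Matrix (Fin 2 × Fin 2) (Fin 2 × Fin 2) ℂ)
    (A B : Matrix (Fin 2) (Fin 2) ℂ) :
    (ρ * (A ⊗ₖ B)).trace
    = ∑ a : Fin 2, ∑ b : Fin 2, ∑ a' : Fin 2, ∑ b' : Fin 2,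
        ρ (a,b) (a',b') * A a' a * B b' b := by
  simp only [Matrix.trace, Matrix.diag, Matrix.mul_apply, Matrix.kroneckerMap_apply,
    Fintype.sum_prod_type, Fin.sum_univ_two]
  ring

private lemma opBC_smul (a : ℂ) (X : Matrix (Fin 2 × Fin 2) (Fin 2 × Fin 2) ℂ) :
    opBC (a • X) = a • opBC X := by
  ext x y
  simp only [opBC, Matrix.of_apply, Matrix.smul_apply, smul_eq_mul]
  ring

private lemma opBC_sum {α : Type*} (s : Finset α) (f : α → Matrix (Fin 2 × Fin 2) (Fin 2 × Fin 2) ℂ) :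
    opBC (∑ x ∈ s, f x) = ∑ x ∈ s, opBC (f x) := by
  ext x y
  simp only [opBC, Matrix.of_apply, Matrix.sum_apply, Finset.sum_mul, Finset.mul_sum]

private lemma trBC_smul (a : ℂ) (X : Matrix (Fin 2 × Fin 2 × Fin 2 × Fin 2) (Fin 2 × Fin 2 × Fin 2 × Fin 2) ℂ) :
    trBC (a • X) = a • trBC X := by
  ext x y
  simp only [trBC, Matrix.of_apply, Matrix.smul_apply, smul_eq_mul, Finset.mul_sum]

private lemma trBC_sum {α : Type*} (s : Finset α)
    (f : α → Matrix (Fin 2 × Fin 2 × Fin 2 × Fin 2) (Fin 2 × Fin 2 × Fin 2 × Fin 2) ℂ) :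
    trBC (∑ x ∈ s, f x) = ∑ x ∈ s, trBC (f x) := by
  ext x y
  simp only [trBC, Matrix.of_apply, Matrix.sum_apply, Finset.sum_apply]
  exact (Finset.sum_congr rfl fun b _ => Finset.sum_comm).trans Finset.sum_comm

set_option maxHeartbeats 2000000 in
private lemma key0 (ρAB ρCD : Matrix (Fin 2 × Fin 2) (Fin 2 × Fin 2) ℂ)
    (A D : Matrix (Fin 2) (Fin 2) ℂ) (k l : Fin 4) :
    (trBC (stateABCD ρAB ρCD * opBC (σ k ⊗ₖ σ l)) * (A ⊗ₖ D)).trace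
    = (ρAB * (A ⊗ₖ σ k)).trace * (ρCD * (σ l ⊗ₖ D)).trace := by
  have hσ0 : σ 0 = !![1,0;0,1] := by rw [show σ 0 = 1 from rfl, Matrix.one_fin_two]
  have hσ1 : σ 1 = !![0,1;1,0] := rfl
  have hσ2 : σ 2 = !![0,-Complex.I;Complex.I,0] := rfl
  have hσ3 : σ 3 = !![1,0;0,-1] := rfl
  rw [lhs4, tr2, tr2]
  fin_cases k <;> fin_cases l <;>
    simp only [hσ0, hσ1, hσ2, hσ3, Matrix.kroneckerMap_apply, Fin.sum_univ_two,
      Matrix.cons_val', Matrix.cons_val_zero, Matrix.cons_val_one,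
      Matrix.head_cons, Matrix.empty_val', Matrix.cons_val_fin_one, Matrix.head_fin_const] <;>
    norm_num <;> ring

set_option maxHeartbeats 1000000 in
private lemma key (ρAB ρCD E : Matrix (Fin 2 × Fin 2) (Fin 2 × Fin 2) ℂ)
    (A D : Matrix (Fin 2) (Fin 2) ℂ) :
    (trBC (stateABCD ρAB ρCD * opBC E) * (A ⊗ₖ D)).trace
    = ∑ k : Fin 4, ∑ l : Fin 4, (1/4 : ℂ) * (E * (σ k ⊗ₖ σ l)).trace
        * (ρAB * (A ⊗ₖ σ k)).trace * (ρCD * (σ l ⊗ₖ D)).trace := by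
  set c : Fin 4 → Fin 4 → ℂ := fun k l => (1/4 : ℂ) * (E * (σ k ⊗ₖ σ l)).trace with hc
  have hdec : E = ∑ k : Fin 4, ∑ l : Fin 4, c k l • (σ k ⊗ₖ σ l) := by
    ext u v
    obtain ⟨u1, u2⟩ := u
    obtain ⟨v1, v2⟩ := v
    simp only [Matrix.sum_apply, Matrix.smul_apply, Matrix.kroneckerMap_apply, smul_eq_mul, hc]
    rw [Eexp E u1 u2 v1 v2]
    exact Finset.sum_congr rfl fun k _ => Finset.sum_congr rfl fun l _ => by ring
  conv_lhs => rw [hdec]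
  simp only [opBC_sum, opBC_smul, Matrix.mul_sum, Matrix.mul_smul, trBC_sum, trBC_smul,
    Matrix.sum_mul, Matrix.smul_mul, Matrix.trace_sum, Matrix.trace_smul, smul_eq_mul]
  refine Finset.sum_congr rfl fun k _ => Finset.sum_congr rfl fun l _ => ?_
  rw [key0]
  ring

theorem stmt3 (ρAB ρCD E : Matrix (Fin 2 × Fin 2) (Fin 2 × Fin 2) ℂ)
    (hAB : ρAB.PosSemidef) (hABtr : ρAB.trace = 1)
    (hCD : ρCD.PosSemidef) (hCDtr : ρCD.trace = 1)
    (hE : E.PosSemidef)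
    (RAB RCD rBC : Matrix (Fin 4) (Fin 4) ℂ)
    (hRAB : ∀ i j, RAB i j = (ρAB * (σ i ⊗ₖ σ j)).trace)
    (hRCD : ∀ i j, RCD i j = (ρCD * (σ i ⊗ₖ σ j)).trace)
    (hr : ∀ k l, rBC k l = (1/4 : ℂ) * (E * (σ k ⊗ₖ σ l)).trace)
    (p : ℂ) (hp : p = (trBC (stateABCD ρAB ρCD * opBC E)).trace) (hp0 : p ≠ 0)
    (ρAD : Matrix (Fin 2 × Fin 2) (Fin 2 × Fin 2) ℂ)
    (hρAD : ρAD = p⁻¹ • trBC (stateABCD ρAB ρCD * opBC E)) :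
    ∀ i j, (ρAD * (σ i ⊗ₖ σ j)).trace
      = (RAB * rBC * RCD) i j / (RAB * rBC * RCD) 0 0 := by
  have hM : ∀ i j, (trBC (stateABCD ρAB ρCD * opBC E) * (σ i ⊗ₖ σ j)).trace
      = (RAB * rBC * RCD) i j := by
    intro i j
    rw [key]
    simp only [Matrix.mul_apply, Finset.sum_mul, Finset.mul_sum, Fin.sum_univ_four,
      hRAB, hRCD, hr]
    ring
  have hp' : p = (RAB * rBC * RCD) 0 0 := by
    rw [hp, ← hM 0 0, show σ 0 = 1 from rfl, Matrix.one_kronecker_one, Matrix.mul_one]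
  intro i j
  rw [hρAD, Matrix.smul_mul, Matrix.trace_smul, smul_eq_mul, hM i j, hp',
    div_eq_mul_inv, mul_comm]
end

section
/- Let ρ^{AB} be an arbitrary two-qubit density matrix, ρ^{CD} = Φ_n a Bell state and E^{BC} = Φ_m a Bell projector, n,m ∈ {0,1,2,3}. Then the normalized post-swapping state equals ρ^{AD}_{n,m} = (𝟙 ⊗ σ_n σ_m) ρ^{AB} (𝟙 ⊗ σ_m σ_n), i.e. the post-swapping state is local-unitarily equivalent to the input state. -/
open Matrix Kronecker ComplexOrder

/-- The singlet ket (1/√2)(|01⟩ − |10⟩). -/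
noncomputable def singletKet : Fin 2 × Fin 2 → ℂ :=
  fun p => if p = (0, 1) then (Real.sqrt 2)⁻¹ else if p = (1, 0) then -(Real.sqrt 2)⁻¹ else 0

/-- The singlet projector Φ⁻ = |Φ⁻⟩⟨Φ⁻|. -/
noncomputable def singlet : Matrix (Fin 2 × Fin 2) (Fin 2 × Fin 2) ℂ :=
  Matrix.of fun p q => singletKet p * star (singletKet q)

/-- The Bell states Φ_n = (𝟙 ⊗ σ_n) Φ⁻ (𝟙 ⊗ σ_n). -/
noncomputable def bell (n : Fin 4) : Matrix (Fin 2 × Fin 2) (Fin 2 × Fin 2) ℂ :=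
  ((1 : Matrix (Fin 2) (Fin 2) ℂ) ⊗ₖ σ n) * singlet * ((1 : Matrix (Fin 2) (Fin 2) ℂ) ⊗ₖ σ n)

/-! ### Auxiliary machinery -/

/-- The (unnormalized) Bell kets: ψ n = √2 (1 ⊗ σ n) |Φ⁻⟩. -/
noncomputable def ψ : Fin 4 → Fin 2 × Fin 2 → ℂ := fun n p =>
  ![![![0,1],![-1,0]], ![![1,0],![0,-1]], ![![-Complex.I,0],![0,-Complex.I]],
    ![![0,-1],![-1,0]]] n p.1 p.2

noncomputable def ε : Fin 4 → ℂ := ![-1, 1, 1, 1]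

set_option maxHeartbeats 4000000 in
lemma bell_apply (n : Fin 4) (p q : Fin 2 × Fin 2) :
    bell n p q = (2:ℂ)⁻¹ * (ψ n p * star (ψ n q)) := by
  have h2 : ((Real.sqrt 2 : ℝ) : ℂ)⁻¹ * ((Real.sqrt 2 : ℝ) : ℂ)⁻¹ = (2:ℂ)⁻¹ := by
    rw [← mul_inv]
    norm_cast
    rw [Real.mul_self_sqrt (by norm_num)]
    push_cast; ring
  obtain ⟨a, b⟩ := p
  obtain ⟨c, d⟩ := q
  fin_cases n <;> fin_cases a <;> fin_cases b <;> fin_cases c <;> fin_cases d <;>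
    simp only [bell, singlet, singletKet, σ, ψ, Matrix.mul_apply, Matrix.kroneckerMap_apply,
      Fintype.sum_prod_type, Fin.sum_univ_two, Matrix.one_apply, Matrix.of_apply,
      Matrix.cons_val_zero, Matrix.cons_val_one, Matrix.head_cons, Matrix.cons_val',
      Matrix.head_fin_const, Matrix.empty_val', Matrix.cons_val_fin_one, Fin.isValue] <;>
    simp [Prod.ext_iff, Fin.ext_iff, star_inv₀, mul_comm, mul_assoc, mul_left_comm] <;>
    rw [show ((Real.sqrt 2 : ℝ) : ℂ)⁻¹ * ((Real.sqrt 2 : ℝ) : ℂ)⁻¹ = (2:ℂ)⁻¹ from h2] <;>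
    ring_nf <;> simp [Complex.I_sq] <;> ring_nf

set_option maxHeartbeats 4000000 in
lemma sum_psi (n m : Fin 4) (b d : Fin 2) :
    ∑ c : Fin 2, ψ n (c, d) * star (ψ m (b, c)) = ε m * (σ n * σ m) d b := by
  fin_cases n <;> fin_cases m <;> fin_cases b <;> fin_cases d <;>
    simp [ψ, σ, ε, Matrix.mul_apply, Fin.sum_univ_two, Complex.ext_iff]

lemma sigma_sq (k : Fin 4) : σ k * σ k = 1 := by
  fin_cases k <;>
    · ext i j
      fin_cases i <;> fin_cases j <;>
        simp [σ, Matrix.mul_apply, Fin.sum_univ_two, Matrix.one_apply, Complex.ext_iff]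

lemma star_sigma_entry (n m : Fin 4) (i j : Fin 2) :
    star ((σ n * σ m) i j) = (σ m * σ n) j i := by
  fin_cases n <;> fin_cases m <;> fin_cases i <;> fin_cases j <;>
    simp [σ, Matrix.mul_apply, Fin.sum_univ_two, Complex.ext_iff]

lemma eps_cases (m : Fin 4) : ε m = 1 ∨ ε m = -1 := by
  fin_cases m <;> simp [ε]

lemma entry (ρ X Y : Matrix (Fin 2 × Fin 2) (Fin 2 × Fin 2) ℂ) (a d a' d' : Fin 2) :
    trBC (stateABCD ρ X * opBC Y) (a, d) (a', d') =
      ∑ b : Fin 2, ∑ b' : Fin 2, ∑ c : Fin 2, ∑ c' : Fin 2,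
        ρ (a, b) (a', b') * X (c, d) (c', d') * Y (b', c') (b, c) := by
  fin_cases a' <;> fin_cases d' <;>
    · simp only [trBC, stateABCD, opBC, Matrix.mul_apply, Matrix.of_apply,
        Fintype.sum_prod_type, Fin.sum_univ_two]
      norm_num
      ring

lemma key_s7 (ρ : Matrix (Fin 2 × Fin 2) (Fin 2 × Fin 2) ℂ) (n m : Fin 4) :
    trBC (stateABCD ρ (bell n) * opBC (bell m)) =
      (4:ℂ)⁻¹ • (((1 : Matrix (Fin 2) (Fin 2) ℂ) ⊗ₖ (σ n * σ m)) * ρ *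
        ((1 : Matrix (Fin 2) (Fin 2) ℂ) ⊗ₖ (σ m * σ n))) := by
  ext ⟨a, d⟩ ⟨a', d'⟩
  rw [entry]
  have hR : ((4:ℂ)⁻¹ • (((1 : Matrix (Fin 2) (Fin 2) ℂ) ⊗ₖ (σ n * σ m)) * ρ *
      ((1 : Matrix (Fin 2) (Fin 2) ℂ) ⊗ₖ (σ m * σ n)))) (a, d) (a', d') =
      (4:ℂ)⁻¹ * ∑ b : Fin 2, ∑ b' : Fin 2,
        (σ n * σ m) d b * ρ (a, b) (a', b') * (σ m * σ n) b' d' := by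
    rw [Matrix.smul_apply, smul_eq_mul]
    congr 1
    fin_cases a <;> fin_cases a' <;>
      · simp only [Matrix.mul_apply, Matrix.kroneckerMap_apply, Matrix.one_apply,
          Fintype.sum_prod_type, Fin.sum_univ_two]
        norm_num
        ring
  rw [hR]
  have step : ∀ b b' : Fin 2,
      (∑ c : Fin 2, ∑ c' : Fin 2,
        ρ (a, b) (a', b') * bell n (c, d) (c', d') * bell m (b', c') (b, c)) =
      (4:ℂ)⁻¹ * ρ (a, b) (a', b') *
        ((∑ c : Fin 2, ψ n (c, d) * star (ψ m (b, c))) *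
          star (∑ c : Fin 2, ψ n (c, d') * star (ψ m (b', c)))) := by
    intro b b'
    simp only [bell_apply, Fin.sum_univ_two, star_add, star_mul', star_star]
    ring
  simp only [step, sum_psi, star_mul', star_star, star_sigma_entry]
  have hε : star (ε m) = ε m ∧ ε m * ε m = 1 := by
    rcases eps_cases m with h | h <;> rw [h] <;> norm_num
  obtain ⟨h1, h2⟩ := hε
  simp only [h1, Fin.sum_univ_two]
  linear_combination ((4:ℂ)⁻¹ * ((σ n * σ m) d 0 * ρ (a,0) (a',0) * (σ m * σ n) 0 d'
    + (σ n * σ m) d 0 * ρ (a,0) (a',1) * (σ m * σ n) 1 d'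
    + (σ n * σ m) d 1 * ρ (a,1) (a',0) * (σ m * σ n) 0 d'
    + (σ n * σ m) d 1 * ρ (a,1) (a',1) * (σ m * σ n) 1 d')) * (h2 - 1) + 0

lemma trace_key (ρ : Matrix (Fin 2 × Fin 2) (Fin 2 × Fin 2) ℂ) (hABtr : ρ.trace = 1)
    (n m : Fin 4) :
    (trBC (stateABCD ρ (bell n) * opBC (bell m))).trace = (4:ℂ)⁻¹ := by
  rw [key_s7, Matrix.trace_smul, Matrix.trace_mul_cycle]
  rw [← Matrix.mul_kronecker_mul, Matrix.one_mul]
  rw [show σ m * σ n * (σ n * σ m) = σ m * (σ n * σ n) * σ m by noncomm_ring,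
    sigma_sq, Matrix.mul_one, sigma_sq, Matrix.one_kronecker_one, Matrix.one_mul, hABtr]
  simp

theorem stmt7 (ρAB : Matrix (Fin 2 × Fin 2) (Fin 2 × Fin 2) ℂ)
    (hAB : ρAB.PosSemidef) (hABtr : ρAB.trace = 1)
    (n m : Fin 4)
    (p : ℂ) (hp : p = (trBC (stateABCD ρAB (bell n) * opBC (bell m))).trace)
    (hppos : 0 < p.re) (hpim : p.im = 0)
    (ρAD : Matrix (Fin 2 × Fin 2) (Fin 2 × Fin 2) ℂ)
    (hρAD : ρAD = p⁻¹ • trBC (stateABCD ρAB (bell n) * opBC (bell m))) :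
    ρAD = ((1 : Matrix (Fin 2) (Fin 2) ℂ) ⊗ₖ (σ n * σ m)) * ρAB *
            ((1 : Matrix (Fin 2) (Fin 2) ℂ) ⊗ₖ (σ m * σ n)) := by
  have hp4 : p = (4:ℂ)⁻¹ := by rw [hp, trace_key ρAB hABtr]
  rw [hρAD, key_s7, hp4, smul_smul]
  norm_num
end

section
/- Call a two-qubit state ρ Bell-diagonal if its Bloch matrix R has the block form R = [[1, 0ᵀ],[0, T]] for some 3×3 real matrix T (i.e. both local Bloch vectors vanish). If ρ^{AB} and ρ^{CD} are Bell-diagonal with correlation matrices T and S, and the POVM element E^{BC} has coefficient matrix 𝔯 = [[A₁, 0ᵀ],[0, U]] with A₁ ≠ 0, then the post-swapping state ρ^{AD} is Bell-diagonal with Bloch matrix [[1, 0ᵀ],[0, (1/A₁)TUS]]. -/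
open Matrix Kronecker ComplexOrder

/-!
The unnormalised post-swapping state `Φ(E) = tr_BC[(ρ^{AB} ⊗ ρ^{CD})(𝟙 ⊗ E ⊗ 𝟙)]` is linear in `E`.
Expanding `E` in the Pauli product basis, `Φ(σ_k ⊗ σ_l)` paired with `σ_i ⊗ σ_j` factorises as
`R^{AB}_{ik} R^{CD}_{lj}`, so the Bloch matrix of `Φ(E)` is `R^{AB} 𝔯 R^{CD}`. Matrices of the
shape `[[a, 0ᵀ], [0, T]]` are closed under products, with corners and lower blocks multiplying
separately; since `R_{00} = Tr ρ = 1`, the normalisation `Tr Φ(E)` is the corner `A₁` of `𝔯`.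
-/

namespace Matrix

variable {n : ℕ} {α : Type*}

def IsCornerBlockDiagonal [Zero α] (M : Matrix (Fin (n + 1)) (Fin (n + 1)) α) : Prop :=
  ∀ j : Fin (n + 1), j ≠ 0 → M 0 j = 0 ∧ M j 0 = 0

variable [NonUnitalNonAssocSemiring α] {A B : Matrix (Fin (n + 1)) (Fin (n + 1)) α}

theorem IsCornerBlockDiagonal.mul_apply_zero_left (hA : A.IsCornerBlockDiagonal)
    (j : Fin (n + 1)) : (A * B) 0 j = A 0 0 * B 0 j := by
  rw [mul_apply, Fin.sum_univ_succ, Finset.sum_eq_zero fun k _ => by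
    rw [(hA k.succ k.succ_ne_zero).1, zero_mul], add_zero]

theorem IsCornerBlockDiagonal.mul_apply_zero_right (hB : B.IsCornerBlockDiagonal)
    (i : Fin (n + 1)) : (A * B) i 0 = A i 0 * B 0 0 := by
  rw [mul_apply, Fin.sum_univ_succ, Finset.sum_eq_zero fun k _ => by
    rw [(hB k.succ k.succ_ne_zero).2, mul_zero], add_zero]

theorem IsCornerBlockDiagonal.submatrix_succ_mul (hA : A.IsCornerBlockDiagonal) :
    (A * B).submatrix Fin.succ Fin.succ
      = A.submatrix Fin.succ Fin.succ * B.submatrix Fin.succ Fin.succ := by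
  ext i j
  rw [submatrix_apply, mul_apply, Fin.sum_univ_succ, (hA i.succ i.succ_ne_zero).2, zero_mul,
    zero_add]
  rfl

theorem IsCornerBlockDiagonal.mul (hA : A.IsCornerBlockDiagonal) (hB : B.IsCornerBlockDiagonal) :
    (A * B).IsCornerBlockDiagonal := fun j hj => by
  rw [hA.mul_apply_zero_left, hB.mul_apply_zero_right, (hB j hj).1, (hA j hj).2, mul_zero,
    zero_mul]
  exact ⟨rfl, rfl⟩

end Matrix

theorem sum_pauli_apply_mul_pauli_apply (a b c d : Fin 2) :
    ∑ k, σ k a b * σ k c d = if a = d ∧ b = c then 2 else 0 := by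
  fin_cases a <;> fin_cases b <;> fin_cases c <;> fin_cases d <;>
    simp [σ, Fin.sum_univ_four, Matrix.one_fin_two] <;> norm_num

noncomputable def blochMatrix (ρ : Matrix (Fin 2 × Fin 2) (Fin 2 × Fin 2) ℂ) :
    Matrix (Fin 4) (Fin 4) ℂ :=
  of fun i j => (ρ * (σ i ⊗ₖ σ j)).trace

theorem sum_blochMatrix_smul_pauli (E : Matrix (Fin 2 × Fin 2) (Fin 2 × Fin 2) ℂ) :
    ∑ k, ∑ l, blochMatrix E k l • (σ k ⊗ₖ σ l) = (4 : ℂ) • E := by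
  ext x y
  have completeness (u v : Fin 2 × Fin 2) :
      ∑ k, ∑ l, (σ k ⊗ₖ σ l) v u * (σ k ⊗ₖ σ l) x y = if u = x ∧ v = y then 4 else 0 := by
    simp only [kroneckerMap_apply]
    calc _ = (∑ k, σ k v.1 u.1 * σ k x.1 y.1) * ∑ l, σ l v.2 u.2 * σ l x.2 y.2 := by
            rw [Finset.sum_mul_sum]; simp only [mul_mul_mul_comm]
      _ = _ := by
        simp only [sum_pauli_apply_mul_pauli_apply, Prod.ext_iff]
        split_ifs <;> (try norm_num) <;> tauto
  calc _ = ∑ u, ∑ v, E u v * ∑ k, ∑ l, (σ k ⊗ₖ σ l) v u * (σ k ⊗ₖ σ l) x y := by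
          simp only [blochMatrix, Matrix.sum_apply, Matrix.smul_apply, of_apply, trace, diag,
            mul_apply, smul_eq_mul, Finset.sum_mul, Finset.mul_sum, mul_assoc]
          conv_lhs => enter [2, k]; rw [Finset.sum_comm]; enter [2, u]; rw [Finset.sum_comm]
          rw [Finset.sum_comm]
          exact Finset.sum_congr rfl fun u _ => Finset.sum_comm
    _ = _ := by
      simp only [completeness]
      simp [ite_and, Matrix.smul_apply, mul_comm]

noncomputable def swapMap (ρAB ρCD : Matrix (Fin 2 × Fin 2) (Fin 2 × Fin 2) ℂ) :
    Matrix (Fin 2 × Fin 2) (Fin 2 × Fin 2) ℂ →ₗ[ℂ] Matrix (Fin 2 × Fin 2) (Fin 2 × Fin 2) ℂ where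
  toFun E := trBC (stateABCD ρAB ρCD * opBC E)
  map_add' E F := by
    ext
    simp only [trBC, opBC, of_apply, mul_apply, Matrix.add_apply, mul_add, add_mul,
      Finset.sum_add_distrib]
  map_smul' c E := by
    ext
    simp only [trBC, opBC, of_apply, mul_apply, Matrix.smul_apply, smul_eq_mul, Finset.mul_sum,
      RingHom.id_apply]
    congr! 3
    ring

theorem trace_swapMap_kronecker_mul_kronecker (ρAB ρCD : Matrix (Fin 2 × Fin 2) (Fin 2 × Fin 2) ℂ)
    (F G P Q : Matrix (Fin 2) (Fin 2) ℂ) :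
    (swapMap ρAB ρCD (F ⊗ₖ G) * (P ⊗ₖ Q)).trace
      = (ρAB * (P ⊗ₖ F)).trace * (ρCD * (G ⊗ₖ Q)).trace := by
  simp only [swapMap, LinearMap.coe_mk, AddHom.coe_mk, trace, diag, mul_apply, trBC,
    stateABCD, opBC, kroneckerMap_apply, of_apply, Fintype.sum_prod_type, Fin.sum_univ_two]
  norm_num
  ring

theorem blochMatrix_swapMap (ρAB ρCD E : Matrix (Fin 2 × Fin 2) (Fin 2 × Fin 2) ℂ) :
    blochMatrix (swapMap ρAB ρCD E)
      = blochMatrix ρAB * ((1 / 4 : ℂ) • blochMatrix E) * blochMatrix ρCD := by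
  have hE : E = (1 / 4 : ℂ) • ∑ k, ∑ l, blochMatrix E k l • (σ k ⊗ₖ σ l) := by
    rw [sum_blochMatrix_smul_pauli, smul_smul]; norm_num
  ext i j
  conv_lhs => rw [hE]
  simp only [blochMatrix, of_apply, map_smul, map_sum, smul_mul, trace_smul,
    trace_sum, smul_eq_mul, trace_swapMap_kronecker_mul_kronecker, mul_apply, Matrix.smul_apply,
    Finset.mul_sum, Finset.sum_mul]
  rw [Finset.sum_comm]
  refine Finset.sum_congr rfl fun l _ => Finset.sum_congr rfl fun k _ => ?_
  ring

theorem blochMatrix_smul (c : ℂ) (ρ : Matrix (Fin 2 × Fin 2) (Fin 2 × Fin 2) ℂ) :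
    blochMatrix (c • ρ) = c • blochMatrix ρ := by
  ext i j
  simp only [blochMatrix, of_apply, Matrix.smul_apply, smul_mul, trace_smul]

theorem blochMatrix_zero_zero (ρ : Matrix (Fin 2 × Fin 2) (Fin 2 × Fin 2) ℂ) :
    blochMatrix ρ 0 0 = ρ.trace := by
  have hσ0 : σ 0 = 1 := rfl
  rw [blochMatrix, of_apply, hσ0, one_kronecker_one, mul_one]

theorem stmt11_general (ρAB ρCD E : Matrix (Fin 2 × Fin 2) (Fin 2 × Fin 2) ℂ)
    (hABtr : ρAB.trace = 1)
    (hCDtr : ρCD.trace = 1)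
    (RAB RCD rBC : Matrix (Fin 4) (Fin 4) ℂ)
    (hRAB : ∀ i j, RAB i j = (ρAB * (σ i ⊗ₖ σ j)).trace)
    (hRCD : ∀ i j, RCD i j = (ρCD * (σ i ⊗ₖ σ j)).trace)
    (hr : ∀ k l, rBC k l = (1/4 : ℂ) * (E * (σ k ⊗ₖ σ l)).trace)
    -- ρ^{AB}, ρ^{CD} Bell-diagonal: vanishing local Bloch vectors
    (hABbd : ∀ j : Fin 4, j ≠ 0 → RAB 0 j = 0 ∧ RAB j 0 = 0)
    (hCDbd : ∀ j : Fin 4, j ≠ 0 → RCD 0 j = 0 ∧ RCD j 0 = 0)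
    -- E^{BC} Bell-diagonal with (0,0)-coefficient A₁ ≠ 0
    (hrbd : ∀ j : Fin 4, j ≠ 0 → rBC 0 j = 0 ∧ rBC j 0 = 0)
    (A₁ : ℂ) (hA₁ : A₁ = rBC 0 0) (hA₁0 : A₁ ≠ 0)
    -- normalized post-swapping state
    (p : ℂ) (hp : p = (trBC (stateABCD ρAB ρCD * opBC E)).trace)
    (ρAD : Matrix (Fin 2 × Fin 2) (Fin 2 × Fin 2) ℂ)
    (hρAD : ρAD = p⁻¹ • trBC (stateABCD ρAB ρCD * opBC E))
    (RAD : Matrix (Fin 4) (Fin 4) ℂ)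
    (hRAD : ∀ i j, RAD i j = (ρAD * (σ i ⊗ₖ σ j)).trace) :
    RAD 0 0 = 1 ∧ (∀ j : Fin 4, j ≠ 0 → RAD 0 j = 0 ∧ RAD j 0 = 0) ∧
      ∀ i j : Fin 3, RAD i.succ j.succ =
        ((Matrix.of fun a b : Fin 3 => RAB a.succ b.succ) *
         (Matrix.of fun a b : Fin 3 => rBC a.succ b.succ) *
         (Matrix.of fun a b : Fin 3 => RCD a.succ b.succ)) i j / A₁ := by
  replace hABbd : RAB.IsCornerBlockDiagonal := hABbd
  replace hCDbd : RCD.IsCornerBlockDiagonal := hCDbd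
  replace hrbd : rBC.IsCornerBlockDiagonal := hrbd
  have hRAB' : RAB = blochMatrix ρAB := Matrix.ext hRAB
  have hRCD' : RCD = blochMatrix ρCD := Matrix.ext hRCD
  have hrBC' : rBC = (1 / 4 : ℂ) • blochMatrix E := Matrix.ext hr
  have hswap : blochMatrix (swapMap ρAB ρCD E) = RAB * rBC * RCD := by
    rw [blochMatrix_swapMap, hRAB', hRCD', hrBC']
  have hdiag : (RAB * rBC * RCD) 0 0 = A₁ := by
    rw [(hABbd.mul hrbd).mul_apply_zero_left, hABbd.mul_apply_zero_left, hRAB', hRCD',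
      blochMatrix_zero_zero, blochMatrix_zero_zero, hABtr, hCDtr, one_mul, mul_one, hA₁]
  have hp' : p = A₁ := by
    rw [hp, ← blochMatrix_zero_zero, ← hdiag, ← hswap]
    rfl
  have hRAD' : RAD = A₁⁻¹ • (RAB * rBC * RCD) := by
    rw [← hswap, ← hp', ← blochMatrix_smul]
    ext i j
    rw [hRAD, hρAD]
    rfl
  have hprod := (hABbd.mul hrbd).mul hCDbd
  refine ⟨?_, fun j hj => ?_, fun i j => ?_⟩
  · rw [hRAD', Matrix.smul_apply, hdiag, smul_eq_mul, inv_mul_cancel₀ hA₁0]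
  · rw [hRAD', Matrix.smul_apply, Matrix.smul_apply, (hprod j hj).1, (hprod j hj).2, smul_zero]
    exact ⟨rfl, rfl⟩
  · rw [hRAD', Matrix.smul_apply, smul_eq_mul, div_eq_inv_mul]
    change _ * (RAB * rBC * RCD).submatrix Fin.succ Fin.succ i j = _
    rw [(hABbd.mul hrbd).submatrix_succ_mul, hABbd.submatrix_succ_mul]
    rfl

theorem stmt11 (ρAB ρCD E : Matrix (Fin 2 × Fin 2) (Fin 2 × Fin 2) ℂ)
    (hAB : ρAB.PosSemidef) (hABtr : ρAB.trace = 1)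
    (hCD : ρCD.PosSemidef) (hCDtr : ρCD.trace = 1)
    (hE : E.PosSemidef)
    (RAB RCD rBC : Matrix (Fin 4) (Fin 4) ℂ)
    (hRAB : ∀ i j, RAB i j = (ρAB * (σ i ⊗ₖ σ j)).trace)
    (hRCD : ∀ i j, RCD i j = (ρCD * (σ i ⊗ₖ σ j)).trace)
    (hr : ∀ k l, rBC k l = (1/4 : ℂ) * (E * (σ k ⊗ₖ σ l)).trace)
    -- ρ^{AB}, ρ^{CD} Bell-diagonal: vanishing local Bloch vectors
    (hABbd : ∀ j : Fin 4, j ≠ 0 → RAB 0 j = 0 ∧ RAB j 0 = 0)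
    (hCDbd : ∀ j : Fin 4, j ≠ 0 → RCD 0 j = 0 ∧ RCD j 0 = 0)
    -- E^{BC} Bell-diagonal with (0,0)-coefficient A₁ ≠ 0
    (hrbd : ∀ j : Fin 4, j ≠ 0 → rBC 0 j = 0 ∧ rBC j 0 = 0)
    (A₁ : ℂ) (hA₁ : A₁ = rBC 0 0) (hA₁0 : A₁ ≠ 0)
    -- normalized post-swapping state
    (p : ℂ) (hp : p = (trBC (stateABCD ρAB ρCD * opBC E)).trace)
    (ρAD : Matrix (Fin 2 × Fin 2) (Fin 2 × Fin 2) ℂ)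
    (hρAD : ρAD = p⁻¹ • trBC (stateABCD ρAB ρCD * opBC E))
    (RAD : Matrix (Fin 4) (Fin 4) ℂ)
    (hRAD : ∀ i j, RAD i j = (ρAD * (σ i ⊗ₖ σ j)).trace) :
    RAD 0 0 = 1 ∧ (∀ j : Fin 4, j ≠ 0 → RAD 0 j = 0 ∧ RAD j 0 = 0) ∧
      ∀ i j : Fin 3, RAD i.succ j.succ =
        ((Matrix.of fun a b : Fin 3 => RAB a.succ b.succ) *
         (Matrix.of fun a b : Fin 3 => rBC a.succ b.succ) *
         (Matrix.of fun a b : Fin 3 => RCD a.succ b.succ)) i j / A₁ :=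
  stmt11_general ρAB ρCD E hABtr hCDtr RAB RCD rBC hRAB hRCD hr hABbd hCDbd hrbd A₁ hA₁ hA₁0 p hp
    ρAD hρAD RAD hRAD
end

section
/- For nonnegative reals ρ_{22}, ρ_{33} with ρ_{22}+ρ_{33} ≤ 1 and ρ_{11} = ρ_{44} = (1−ρ_{22}−ρ_{33})/2, defining Γ_FS = 1/((√ρ_{22}−√ρ_{33})²−1)² and Γ_SF^{(2)} = 1/(2((ρ_{22}+ρ_{33})−(ρ_{22}+ρ_{33})²) + √(((ρ_{22}+ρ_{33})²+(ρ_{22}−1)²+3ρ_{22}²−2ρ_{33})·((ρ_{22}+ρ_{33})²+(ρ_{33}−1)²+3ρ_{33}²−2ρ_{22}))), it holds that Γ_FS ≥ Γ_SF^{(2)} whenever both denominators are positive. -/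
set_option maxHeartbeats 1000000 in
theorem stmt18 (ρ11 ρ22 ρ33 ρ44 : ℝ)
    (h22 : 0 ≤ ρ22) (h33 : 0 ≤ ρ33) (hsum : ρ22 + ρ33 ≤ 1)
    (h11 : ρ11 = (1 - ρ22 - ρ33) / 2) (h44 : ρ44 = ρ11)
    (DFS DSF : ℝ)
    (hDFS : DFS = ((Real.sqrt ρ22 - Real.sqrt ρ33) ^ 2 - 1) ^ 2)
    (hDSF : DSF = 2 * ((ρ22 + ρ33) - (ρ22 + ρ33) ^ 2) +
      Real.sqrt (((ρ22 + ρ33) ^ 2 + (ρ22 - 1) ^ 2 + 3 * ρ22 ^ 2 - 2 * ρ33) *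
                 ((ρ22 + ρ33) ^ 2 + (ρ33 - 1) ^ 2 + 3 * ρ33 ^ 2 - 2 * ρ22)))
    (hDFS0 : 0 < DFS) (hDSF0 : 0 < DSF) :
    1 / DSF ≤ 1 / DFS := by
  have key : DFS ≤ DSF := by
    obtain ⟨a, ha0, ha2⟩ : ∃ a : ℝ, 0 ≤ a ∧ a ^ 2 = ρ22 :=
      ⟨Real.sqrt ρ22, Real.sqrt_nonneg _, Real.sq_sqrt h22⟩
    obtain ⟨b, hb0, hb2⟩ : ∃ b : ℝ, 0 ≤ b ∧ b ^ 2 = ρ33 :=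
      ⟨Real.sqrt ρ33, Real.sqrt_nonneg _, Real.sq_sqrt h33⟩
    have haeq : Real.sqrt ρ22 = a := by rw [← ha2, Real.sqrt_sq ha0]
    have hbeq : Real.sqrt ρ33 = b := by rw [← hb2, Real.sqrt_sq hb0]
    subst ha2 hb2
    have hu0 : 0 ≤ 1 - a ^ 2 - b ^ 2 := by linarith
    have hsq : ((a ^ 2 + b ^ 2) ^ 2 + (a ^ 2 - 1) ^ 2 + 3 * (a ^ 2) ^ 2 - 2 * b ^ 2) *
        ((a ^ 2 + b ^ 2) ^ 2 + (b ^ 2 - 1) ^ 2 + 3 * (b ^ 2) ^ 2 - 2 * a ^ 2)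
        = ((1 - a ^ 2 - b ^ 2) ^ 2 + 4 * (a ^ 2) ^ 2) *
          ((1 - a ^ 2 - b ^ 2) ^ 2 + 4 * (b ^ 2) ^ 2) := by ring
    have hc0 : 0 ≤ (1 - a ^ 2 - b ^ 2) ^ 2 + 4 * (a ^ 2 * b ^ 2) := by positivity
    have hcs : ((1 - a ^ 2 - b ^ 2) ^ 2 + 4 * (a ^ 2 * b ^ 2)) ^ 2 ≤
        ((1 - a ^ 2 - b ^ 2) ^ 2 + 4 * (a ^ 2) ^ 2) *
        ((1 - a ^ 2 - b ^ 2) ^ 2 + 4 * (b ^ 2) ^ 2) := by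
      nlinarith [sq_nonneg ((1 - a ^ 2 - b ^ 2) * (a ^ 2 - b ^ 2))]
    have hsqrt : (1 - a ^ 2 - b ^ 2) ^ 2 + 4 * (a ^ 2 * b ^ 2) ≤
        Real.sqrt (((1 - a ^ 2 - b ^ 2) ^ 2 + 4 * (a ^ 2) ^ 2) *
                   ((1 - a ^ 2 - b ^ 2) ^ 2 + 4 * (b ^ 2) ^ 2)) := by
      have h := Real.sqrt_le_sqrt hcs
      rwa [Real.sqrt_sq hc0] at h
    rw [hDFS, hDSF, haeq, hbeq, hsq]
    have hid : 2 * ((a ^ 2 + b ^ 2) - (a ^ 2 + b ^ 2) ^ 2) +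
        ((1 - a ^ 2 - b ^ 2) ^ 2 + 4 * (a ^ 2 * b ^ 2)) -
        ((a - b) ^ 2 - 1) ^ 2 = 2 * ((1 - a ^ 2 - b ^ 2) * (a - b) ^ 2) := by
      ring
    have hpos : 0 ≤ (1 - a ^ 2 - b ^ 2) * (a - b) ^ 2 :=
      mul_nonneg hu0 (sq_nonneg _)
    linarith [hsqrt, hid, hpos]
  exact one_div_le_one_div_of_le hDFS0 key
end
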